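/- arXiv:2512.25062 — 4 statements merged into one kernel-verified Lean document; each statement's English description precedes it below -/
import Mathlib

section
/- Let A be a von Neumann algebra acting on a Hilbert space H that possesses at least one cyclic vector ξ₀. Then the set of cyclic vectors of A equals the Gδ set ⋂_{n>0} ⋃_{O∈A} { ξ ∈ H : ‖O ξ − ξ₀‖ < 1/n }; in particular, the set of cyclic vectors for A is a Gδ subset of H. -/
/-- A vector `ξ` is cyclic for a von Neumann algebra `A` if the set `{a ξ : a ∈ A}`
is dense in `H`. -/
def IsCyclicVector {H : Type*} [NormedAddCommGroup H] [InnerProductSpace ℂ H]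
    [CompleteSpace H] (A : VonNeumannAlgebra H) (ξ : H) : Prop :=
  Dense {y : H | ∃ a : H →L[ℂ] H, a ∈ A ∧ y = a ξ}

lemma key {H : Type*} [NormedAddCommGroup H] [InnerProductSpace ℂ H]
    [CompleteSpace H] (A : VonNeumannAlgebra H) (ξ₀ ξ : H)
    (hcyc : IsCyclicVector A ξ₀)
    (h : ξ₀ ∈ closure {y : H | ∃ a : H →L[ℂ] H, a ∈ A ∧ y = a ξ}) :
    IsCyclicVector A ξ := by
  set S := {y : H | ∃ a : H →L[ℂ] H, a ∈ A ∧ y = a ξ} with hS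
  have hsub : {y : H | ∃ a : H →L[ℂ] H, a ∈ A ∧ y = a ξ₀} ⊆ closure S := by
    rintro - ⟨a, ha, rfl⟩
    have hmap : a '' S ⊆ S := by
      rintro - ⟨-, ⟨b, hb, rfl⟩, rfl⟩
      exact ⟨a * b, mul_mem ha hb, rfl⟩
    have : a ξ₀ ∈ a '' closure S := ⟨ξ₀, h, rfl⟩
    have h2 : a '' closure S ⊆ closure (a '' S) :=
      image_closure_subset_closure_image a.continuous
    exact closure_mono hmap (h2 this)
  have := closure_mono hsub
  rw [closure_closure, hcyc.closure_eq] at this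
  exact dense_iff_closure_eq.mpr (Set.eq_univ_of_univ_subset this)

/-- If `A` has a cyclic vector `ξ₀`, then the set of cyclic vectors of `A` equals the
Gδ set `⋂_{n>0} ⋃_{O ∈ A} {ξ : ‖O ξ − ξ₀‖ < 1/n}`; in particular it is a Gδ subset
of `H`. -/
theorem cyclicVectors_eq_iInter_and_isGδ {H : Type*} [NormedAddCommGroup H]
    [InnerProductSpace ℂ H] [CompleteSpace H] (A : VonNeumannAlgebra H) (ξ₀ : H)
    (hcyc : IsCyclicVector A ξ₀) :
    ({ξ : H | IsCyclicVector A ξ} =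
        ⋂ (n : ℕ) (_ : 0 < n), ⋃ (O : H →L[ℂ] H) (_ : O ∈ A),
          {ξ : H | ‖O ξ - ξ₀‖ < 1 / (n : ℝ)}) ∧
      IsGδ {ξ : H | IsCyclicVector A ξ} := by
  have heq : ({ξ : H | IsCyclicVector A ξ} =
        ⋂ (n : ℕ) (_ : 0 < n), ⋃ (O : H →L[ℂ] H) (_ : O ∈ A),
          {ξ : H | ‖O ξ - ξ₀‖ < 1 / (n : ℝ)}) := by
    ext ξ
    simp only [Set.mem_setOf_eq, Set.mem_iInter, Set.mem_iUnion]
    constructor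
    · intro hξ n hn
      have := hξ ξ₀
      rw [Metric.mem_closure_iff] at this
      obtain ⟨y, ⟨a, ha, rfl⟩, hd⟩ := this (1 / n) (by positivity)
      exact ⟨a, ha, by rwa [dist_comm, dist_eq_norm] at hd⟩
    · intro hξ
      apply key A ξ₀ ξ hcyc
      rw [Metric.mem_closure_iff]
      intro ε hε
      obtain ⟨n, hn⟩ := exists_nat_one_div_lt hε
      obtain ⟨a, ha, h1⟩ := hξ (n + 1) n.succ_pos
      refine ⟨a ξ, ⟨a, ha, rfl⟩, ?_⟩
      rw [dist_comm, dist_eq_norm]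
      calc ‖a ξ - ξ₀‖ < 1 / ((n : ℝ) + 1) := by exact_mod_cast h1
        _ < ε := hn
  refine ⟨heq, heq ▸ ?_⟩
  apply IsGδ.iInter_of_isOpen
  intro n
  rcases Nat.eq_zero_or_pos n with rfl | hn
  · simp only [lt_self_iff_false, Set.iInter_of_empty]
    exact isOpen_univ
  · haveI : Nonempty (0 < n) := ⟨hn⟩
    rw [Set.iInter_const]
    apply isOpen_iUnion
    intro O
    apply isOpen_iUnion
    intro _
    have : {ξ : H | ‖O ξ - ξ₀‖ < 1 / (n : ℝ)} = (fun ξ => O ξ) ⁻¹' Metric.ball ξ₀ (1 / n) := by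
      ext x; simp [Metric.mem_ball, dist_eq_norm]
    rw [this]
    exact Metric.isOpen_ball.preimage O.continuous
end

section
/- Let A be a von Neumann algebra on a Hilbert space H with cyclic vector ξ₀, and suppose every element of A is a strong-operator limit of invertible elements of A. Then the set of cyclic vectors for A is dense in H. -/
lemma isCyclicVector_apply_of_inv {H : Type*} [NormedAddCommGroup H]
    [InnerProductSpace ℂ H] [CompleteSpace H] (A : VonNeumannAlgebra H) (ξ : H)
    (h : IsCyclicVector A ξ) {u v : H →L[ℂ] H} (hu : u ∈ A) (hv : v ∈ A)
    (hvu : v * u = 1) : IsCyclicVector A (u ξ) := by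
  apply h.mono
  rintro y ⟨a, ha, rfl⟩
  refine ⟨a * v, mul_mem ha hv, ?_⟩
  have : v (u ξ) = ξ := by
    have := congrArg (fun w : H →L[ℂ] H => w ξ) hvu
    simpa [ContinuousLinearMap.mul_apply] using this
  simp [ContinuousLinearMap.mul_apply, this]

/-- If `A` has a cyclic vector `ξ₀` and every element of `A` is a strong-operator limit
of a sequence of invertible elements of `A` (with inverses in `A`), then the set of
cyclic vectors for `A` is dense in `H`. -/
theorem dense_cyclicVectors {H : Type*} [NormedAddCommGroup H]
    [InnerProductSpace ℂ H] [CompleteSpace H] (A : VonNeumannAlgebra H) (ξ₀ : H)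
    (hcyc : IsCyclicVector A ξ₀)
    (happrox : ∀ a : H →L[ℂ] H, a ∈ A →
      ∃ u : ℕ → (H →L[ℂ] H),
        (∀ k, u k ∈ A ∧ ∃ v : H →L[ℂ] H, v ∈ A ∧ u k * v = 1 ∧ v * u k = 1) ∧
        ∀ x : H, Filter.Tendsto (fun k => u k x) Filter.atTop (nhds (a x))) :
    Dense {ξ : H | IsCyclicVector A ξ} := by
  rw [Metric.dense_iff]
  intro ξ r hr
  have h2 : (0 : ℝ) < r / 2 := by linarith
  obtain ⟨y, hyball, a, ha, rfl⟩ := (Metric.dense_iff.mp hcyc) ξ (r / 2) h2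
  obtain ⟨u, hprops, htend⟩ := happrox a ha
  have : ∀ᶠ k in Filter.atTop, dist (u k ξ₀) (a ξ₀) < r / 2 :=
    (htend ξ₀).eventually (Metric.eventually_nhds_iff_ball.mpr
      ⟨r / 2, h2, fun z hz => by simpa [Metric.mem_ball] using hz⟩)
  obtain ⟨k, hk⟩ := this.exists
  obtain ⟨huA, v, hvA, _, hvu⟩ := hprops k
  refine ⟨u k ξ₀, ?_, isCyclicVector_apply_of_inv A ξ₀ hcyc huA hvA hvu⟩
  have hd : dist (a ξ₀) ξ < r / 2 := by simpa [dist_comm] using hyball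
  calc dist (u k ξ₀) ξ ≤ dist (u k ξ₀) (a ξ₀) + dist (a ξ₀) ξ := dist_triangle _ _ _
    _ < r / 2 + r / 2 := by linarith
    _ = r := by ring
end

section
/- Let A and B be positive self-adjoint (bounded) operators on a Hilbert space with A ≤ B in the operator order. Then for every α with 0 ≤ α ≤ 1, one has A^α ≤ B^α. -/
theorem loewner_heinz_general {H : Type*} [NormedAddCommGroup H] [InnerProductSpace ℂ H]
    [CompleteSpace H] (A B : H →L[ℂ] H) (hAB : A ≤ B)
    (α : ℝ) (hα0 : 0 ≤ α) (hα1 : α ≤ 1) :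
    A ^ α ≤ B ^ α :=
  CFC.rpow_le_rpow ⟨hα0, hα1⟩ hAB

/-- Löwner–Heinz inequality: if `A` and `B` are positive bounded operators on a
complex Hilbert space with `A ≤ B` in the Loewner order, then `A ^ α ≤ B ^ α` for all
`0 ≤ α ≤ 1`, where powers are taken via the continuous functional calculus. -/
theorem loewner_heinz {H : Type*} [NormedAddCommGroup H] [InnerProductSpace ℂ H]
    [CompleteSpace H] (A B : H →L[ℂ] H) (hA : 0 ≤ A) (hB : 0 ≤ B) (hAB : A ≤ B)
    (α : ℝ) (hα0 : 0 ≤ α) (hα1 : α ≤ 1) :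
    A ^ α ≤ B ^ α :=
  loewner_heinz_general A B hAB α hα0 hα1
end

section
/- Duhamel's formula: for n×n complex matrices A and B, d/ds|_{s=0} e^{A + sB} = ∫_0^1 e^{(1−u)A} B e^{uA} du. -/
/-!
Differentiating `u ↦ e^{(1-u)A} e^{uC}` gives `e^{(1-u)A} (C - A) e^{uC}`, so the fundamental
theorem of calculus yields `e^C - e^A = ∫₀¹ e^{(1-u)A} (C - A) e^{uC} du`. With `C = A + sB` the
difference quotient of `s ↦ e^{A+sB}` at `0` is therefore exactly `∫₀¹ e^{(1-u)A} B e^{u(A+sB)} du`,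
which depends continuously on `s`; letting `s → 0` gives the formula.
-/

open NormedSpace

variable {𝔸 : Type*} [NormedRing 𝔸] [NormedAlgebra ℝ 𝔸] [CompleteSpace 𝔸]

@[fun_prop]
theorem continuous_exp_of_normedAlgebra_real : Continuous (exp : 𝔸 → 𝔸) :=
  continuous_iff_continuousAt.2 fun x => (exp_analytic (𝕂 := ℝ) x).continuousAt

theorem hasDerivAt_exp_one_sub_smul_mul_exp_smul (A C : 𝔸) (u : ℝ) :
    HasDerivAt (fun u : ℝ => exp ((1 - u) • A) * exp (u • C))
      (exp ((1 - u) • A) * (C - A) * exp (u • C)) u := by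
  have hleft : HasDerivAt (fun u : ℝ => exp ((1 - u) • A)) (-(A * exp ((1 - u) • A))) u := by
    simpa [Function.comp_def] using
      (hasDerivAt_exp_smul_const' A (1 - u)).scomp u ((hasDerivAt_id u).const_sub 1)
  have hcomm : A * exp ((1 - u) • A) = exp ((1 - u) • A) * A :=
    ((Commute.refl A).smul_right (1 - u)).exp_right.eq
  refine (hleft.mul (hasDerivAt_exp_smul_const' C u)).congr_deriv ?_
  rw [hcomm]
  noncomm_ring

theorem exp_sub_exp_eq_integral (A C : 𝔸) :
    exp C - exp A = ∫ u in (0 : ℝ)..1, exp ((1 - u) • A) * (C - A) * exp (u • C) := by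
  rw [intervalIntegral.integral_eq_sub_of_hasDerivAt
    (fun u _ => hasDerivAt_exp_one_sub_smul_mul_exp_smul A C u)
    ((by fun_prop : Continuous _).intervalIntegrable 0 1)]
  simp

theorem continuous_integral_exp_mul_exp_add_smul (A B : 𝔸) :
    Continuous fun s : ℝ =>
      ∫ u in (0 : ℝ)..1, exp ((1 - u) • A) * B * exp (u • (A + s • B)) :=
  intervalIntegral.continuous_parametric_intervalIntegral_of_continuous' (by fun_prop) 0 1

theorem slope_exp_add_smul (A B : 𝔸) {s : ℝ} (hs : s ≠ 0) :
    slope (fun s : ℝ => exp (A + s • B)) 0 s =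
      ∫ u in (0 : ℝ)..1, exp ((1 - u) • A) * B * exp (u • (A + s • B)) := by
  rw [slope_def_module, sub_zero, zero_smul, add_zero, exp_sub_exp_eq_integral,
    add_sub_cancel_left]
  simp_rw [mul_smul_comm, smul_mul_assoc, intervalIntegral.integral_smul, smul_smul,
    inv_mul_cancel₀ hs, one_smul]

theorem hasDerivAt_exp_add_smul (A B : 𝔸) :
    HasDerivAt (fun s : ℝ => exp (A + s • B))
      (∫ u in (0 : ℝ)..1, exp ((1 - u) • A) * B * exp (u • A)) 0 := by
  have hcont := (continuous_integral_exp_mul_exp_add_smul A B).tendsto 0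
  rw [zero_smul, add_zero] at hcont
  rw [hasDerivAt_iff_tendsto_slope]
  refine (hcont.mono_left nhdsWithin_le_nhds).congr' ?_
  filter_upwards [self_mem_nhdsWithin] with s hs using (slope_exp_add_smul A B hs).symm

attribute [local instance] Matrix.linftyOpNormedAddCommGroup Matrix.linftyOpNormedRing
  Matrix.linftyOpNormedAlgebra

/-- Duhamel's formula: for `n×n` complex matrices `A` and `B`,
`d/ds|_{s=0} e^{A + sB} = ∫_0^1 e^{(1−u)A} B e^{uA} du`. -/
theorem duhamel_formula {n : ℕ} (A B : Matrix (Fin n) (Fin n) ℂ) :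
    HasDerivAt (fun s : ℝ => NormedSpace.exp (A + s • B))
      (∫ u in (0 : ℝ)..1,
        NormedSpace.exp ((1 - u) • A) * B * NormedSpace.exp (u • A)) 0 :=
  hasDerivAt_exp_add_smul A B
end
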